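/- Let P be the Borel probability measure on ℝ with density f given by f(x) = 1/2 for x ∈ [0, 1/2] ∪ [1, 3/2], f(x) = 1 for x ∈ (1/2, 1), and f(x) = 0 otherwise. Then the set {1/4, 3/4, 5/4} is an optimal set of three-means for P, and the third quantization error is V₃(P) = 1/48. -/
import Mathlib


open MeasureTheory Set

/-- Distortion error of a set `α` with respect to the measure `Q`. -/
noncomputable def distortion (Q : Measure ℝ) (α : Set ℝ) : ℝ :=
  ∫ x, sInf ((fun a => (x - a) ^ 2) '' α) ∂Q

/-- The `n`-th quantization error of the measure `Q`. -/
noncomputable def quantErr (Q : Measure ℝ) (n : ℕ) : ℝ :=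
  sInf { v : ℝ | ∃ α : Set ℝ, α.Finite ∧ α.Nonempty ∧ α.ncard ≤ n ∧ v = distortion Q α }

/-- `α` is an optimal set of `n`-means for `Q`. -/
def IsOptimal (Q : Measure ℝ) (n : ℕ) (α : Set ℝ) : Prop :=
  α.Finite ∧ 1 ≤ α.ncard ∧ α.ncard ≤ n ∧ distortion Q α = quantErr Q n

/-- The density of the mixed distribution `P = (1/2) P₁ + (1/2) P₂`. -/
noncomputable def f2 (x : ℝ) : ℝ :=
  if x ∈ Icc (0 : ℝ) (1 / 2) ∪ Icc (1 : ℝ) (3 / 2) then 1 / 2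
  else if x ∈ Ioo (1 / 2 : ℝ) 1 then 1
  else 0

/-- The mixed distribution `P = (1/2) P₁ + (1/2) P₂`. -/
noncomputable def P2 : Measure ℝ :=
  volume.withDensity fun x => ENNReal.ofReal (f2 x)


noncomputable def gmin (a b c x : ℝ) : ℝ := min (min ((x - a) ^ 2) ((x - b) ^ 2)) ((x - c) ^ 2)

noncomputable def Gq (u v w : ℝ) : ℝ := ((v - w) ^ 3 - (u - w) ^ 3) / 3

lemma gmin_continuous (a b c : ℝ) : Continuous (gmin a b c) := by
  unfold gmin; fun_prop

lemma integral_sq (u v w : ℝ) : ∫ x in u..v, (x - w) ^ 2 = Gq u v w := by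
  have h := intervalIntegral.integral_comp_sub_right (a := u) (b := v) (fun x => x ^ 2) w
  rw [h, integral_pow]
  unfold Gq; norm_num

lemma sInf_triple (p q r x : ℝ) :
    sInf ((fun t => (x - t) ^ 2) '' {p, q, r}) = gmin p q r x := by
  rw [show ({p, q, r} : Set ℝ) = insert p (insert q {r}) from rfl]
  rw [Set.image_insert_eq, Set.image_insert_eq, Set.image_singleton]
  rw [csInf_insert (Set.Finite.bddBelow (by apply Set.toFinite)) (by simp),
    csInf_insert (Set.Finite.bddBelow (by apply Set.toFinite)) (by simp), csInf_singleton]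
  unfold gmin
  rw [min_assoc]

lemma integral_gmin (a b c u v p q : ℝ) (hab : a ≤ b) (hbc : b ≤ c)
    (hup : u ≤ p) (hpq : p ≤ q) (hqv : q ≤ v)
    (h1 : p ≤ (a + b) / 2 ∨ u = p)
    (h2 : ((a + b) / 2 ≤ p ∧ q ≤ (b + c) / 2) ∨ p = q)
    (h3 : (b + c) / 2 ≤ q ∨ q = v) :
    ∫ x in u..v, gmin a b c x = Gq u p a + Gq p q b + Gq q v c := by
  have hint : ∀ s t : ℝ, IntervalIntegrable (gmin a b c) volume s t :=
    fun s t => (gmin_continuous a b c).intervalIntegrable s t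
  have split1 : ∫ x in u..v, gmin a b c x =
      (∫ x in u..p, gmin a b c x) + (∫ x in p..q, gmin a b c x) + (∫ x in q..v, gmin a b c x) := by
    rw [add_assoc, intervalIntegral.integral_add_adjacent_intervals (hint p q) (hint q v),
      intervalIntegral.integral_add_adjacent_intervals (hint u p) (hint p v)]
  rw [split1]
  have e1 : ∫ x in u..p, gmin a b c x = Gq u p a := by
    rcases h1 with h1 | h1
    · rw [show (∫ x in u..p, gmin a b c x) = ∫ x in u..p, (x - a) ^ 2 from ?_, integral_sq]
      apply intervalIntegral.integral_congr
      intro x hx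
      rw [Set.uIcc_of_le hup] at hx
      have hxp : x ≤ (a + b) / 2 := le_trans hx.2 h1
      have hAB : (x - a) ^ 2 ≤ (x - b) ^ 2 := by nlinarith
      have hAC : (x - a) ^ 2 ≤ (x - c) ^ 2 := by nlinarith
      unfold gmin
      rw [min_eq_left ((min_le_left _ _).trans hAC), min_eq_left hAB]
    · subst h1; rw [intervalIntegral.integral_same]; unfold Gq; ring
  have e2 : ∫ x in p..q, gmin a b c x = Gq p q b := by
    rcases h2 with ⟨h2a, h2b⟩ | h2
    · rw [show (∫ x in p..q, gmin a b c x) = ∫ x in p..q, (x - b) ^ 2 from ?_, integral_sq]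
      apply intervalIntegral.integral_congr
      intro x hx
      rw [Set.uIcc_of_le hpq] at hx
      have hx1 : (a + b) / 2 ≤ x := le_trans h2a hx.1
      have hx2 : x ≤ (b + c) / 2 := le_trans hx.2 h2b
      have hBA : (x - b) ^ 2 ≤ (x - a) ^ 2 := by nlinarith
      have hBC : (x - b) ^ 2 ≤ (x - c) ^ 2 := by nlinarith
      unfold gmin
      rw [min_eq_left ((min_le_right _ _).trans hBC), min_eq_right hBA]
    · subst h2; rw [intervalIntegral.integral_same]; unfold Gq; ring
  have e3 : ∫ x in q..v, gmin a b c x = Gq q v c := by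
    rcases h3 with h3 | h3
    · rw [show (∫ x in q..v, gmin a b c x) = ∫ x in q..v, (x - c) ^ 2 from ?_, integral_sq]
      apply intervalIntegral.integral_congr
      intro x hx
      rw [Set.uIcc_of_le hqv] at hx
      have hx1 : (b + c) / 2 ≤ x := le_trans h3 hx.1
      have hx1' : (a + b) / 2 ≤ x := le_trans (by linarith) hx1
      have hCA : (x - c) ^ 2 ≤ (x - a) ^ 2 := by nlinarith
      have hCB : (x - c) ^ 2 ≤ (x - b) ^ 2 := by nlinarith
      unfold gmin
      rw [min_eq_right (le_min hCA hCB)]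
    · subst h3; rw [intervalIntegral.integral_same]; unfold Gq; ring
  rw [e1, e2, e3]

set_option maxHeartbeats 2000000 in
lemma main_ineq (a b c : ℝ) (h0 : 0 ≤ a) (hab : a ≤ b) (hbc : b ≤ c) (hc : c ≤ 3 / 2) :
    1 / 48 ≤ (1 / 2) * (∫ x in (0:ℝ)..(1 / 2), gmin a b c x)
      + (∫ x in (1 / 2:ℝ)..1, gmin a b c x)
      + (1 / 2) * (∫ x in (1:ℝ)..(3 / 2), gmin a b c x) := by
  have hm0 : (0:ℝ) ≤ (a + b) / 2 := by linarith
  have hm12 : (a + b) / 2 ≤ (b + c) / 2 := by linarith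
  have hm2c : (b + c) / 2 ≤ 3 / 2 := by linarith
  have hm1c : (a + b) / 2 ≤ 3 / 2 := by linarith
  rcases le_total ((a + b) / 2) (1 / 2) with hA | hA
  · rcases le_total ((b + c) / 2) (1 / 2) with hB | hB
    · -- case AA
      rw [integral_gmin a b c 0 (1/2) ((a+b)/2) ((b+c)/2) hab hbc hm0 hm12 hB
            (Or.inl le_rfl) (Or.inl ⟨le_rfl, le_rfl⟩) (Or.inl le_rfl),
          integral_gmin a b c (1/2) 1 (1/2) (1/2) hab hbc le_rfl le_rfl (by norm_num)
            (Or.inr rfl) (Or.inr rfl) (Or.inl hB),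
          integral_gmin a b c 1 (3/2) 1 1 hab hbc le_rfl le_rfl (by norm_num)
            (Or.inr rfl) (Or.inr rfl) (Or.inl (by linarith))]
      unfold Gq
      nlinarith [sq_nonneg (c-1), sq_nonneg (b+c-1), sq_nonneg (a-b), sq_nonneg (b-c),
        mul_nonneg h0 h0, sq_nonneg (a+b-1), sq_nonneg c]
    · rcases le_total ((b + c) / 2) 1 with hB2 | hB2
      · -- case AB
        rw [integral_gmin a b c 0 (1/2) ((a+b)/2) (1/2) hab hbc hm0 hA le_rfl
              (Or.inl le_rfl) (Or.inl ⟨le_rfl, hB⟩) (Or.inr rfl),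
            integral_gmin a b c (1/2) 1 (1/2) ((b+c)/2) hab hbc le_rfl hB hB2
              (Or.inr rfl) (Or.inl ⟨hA, le_rfl⟩) (Or.inl le_rfl),
            integral_gmin a b c 1 (3/2) 1 1 hab hbc le_rfl le_rfl (by norm_num)
              (Or.inr rfl) (Or.inr rfl) (Or.inl hB2)]
        unfold Gq
        nlinarith [sq_nonneg (a-1/4), sq_nonneg (b-3/4), sq_nonneg (c-5/4), sq_nonneg (a+b-1),
          sq_nonneg (b+c-2), mul_nonneg (sub_nonneg.2 hab) (by linarith : (0:ℝ) ≤ 1 - (a+b)),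
          mul_nonneg (by linarith : (0:ℝ) ≤ b + c - 1) (by linarith : (0:ℝ) ≤ 2 - (b+c)),
          sq_nonneg (a-b+1/2), sq_nonneg (b-c+1/2)]
      · -- case AC
        rw [integral_gmin a b c 0 (1/2) ((a+b)/2) (1/2) hab hbc hm0 hA le_rfl
              (Or.inl le_rfl) (Or.inl ⟨le_rfl, by linarith⟩) (Or.inr rfl),
            integral_gmin a b c (1/2) 1 (1/2) 1 hab hbc le_rfl (by norm_num) le_rfl
              (Or.inr rfl) (Or.inl ⟨hA, hB2⟩) (Or.inr rfl),
            integral_gmin a b c 1 (3/2) 1 ((b+c)/2) hab hbc le_rfl hB2 hm2c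
              (Or.inr rfl) (Or.inl ⟨by linarith, le_rfl⟩) (Or.inl le_rfl)]
        unfold Gq
        nlinarith [sq_nonneg (a-1/4), sq_nonneg (b-3/4), sq_nonneg (c-5/4), sq_nonneg (a+b-1),
          sq_nonneg (b+c-2),
          mul_nonneg (by linarith : (0:ℝ) ≤ 1 - (a+b)) (by linarith : (0:ℝ) ≤ b + c - 2),
          sq_nonneg (a-b+1/2), sq_nonneg (b-c+1/2)]
  · rcases le_total ((b + c) / 2) 1 with hB | hB
    · -- case BB
      rw [integral_gmin a b c 0 (1/2) (1/2) (1/2) hab hbc (by norm_num) le_rfl le_rfl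
            (Or.inl hA) (Or.inr rfl) (Or.inr rfl),
          integral_gmin a b c (1/2) 1 ((a+b)/2) ((b+c)/2) hab hbc hA hm12 hB
            (Or.inl le_rfl) (Or.inl ⟨le_rfl, le_rfl⟩) (Or.inl le_rfl),
          integral_gmin a b c 1 (3/2) 1 1 hab hbc le_rfl le_rfl (by norm_num)
            (Or.inr rfl) (Or.inr rfl) (Or.inl hB)]
      unfold Gq
      nlinarith [sq_nonneg (a-1/4), sq_nonneg (b-3/4), sq_nonneg (c-5/4), sq_nonneg (a+b-1),
        sq_nonneg (b+c-2),
        mul_nonneg (by linarith : (0:ℝ) ≤ a + b - 1) (by linarith : (0:ℝ) ≤ 2 - (b+c)),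
        sq_nonneg (a-b+1/2), sq_nonneg (b-c+1/2)]
    · rcases le_total ((a + b) / 2) 1 with hA2 | hA2
      · -- case BC
        rw [integral_gmin a b c 0 (1/2) (1/2) (1/2) hab hbc (by norm_num) le_rfl le_rfl
              (Or.inl hA) (Or.inr rfl) (Or.inr rfl),
            integral_gmin a b c (1/2) 1 ((a+b)/2) 1 hab hbc hA hA2 le_rfl
              (Or.inl le_rfl) (Or.inl ⟨le_rfl, hB⟩) (Or.inr rfl),
            integral_gmin a b c 1 (3/2) 1 ((b+c)/2) hab hbc le_rfl hB hm2c
              (Or.inr rfl) (Or.inl ⟨hA2, le_rfl⟩) (Or.inl le_rfl)]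
        unfold Gq
        nlinarith [sq_nonneg (a-1/4), sq_nonneg (b-3/4), sq_nonneg (c-5/4), sq_nonneg (a+b-1),
          sq_nonneg (b+c-2),
          mul_nonneg (by linarith : (0:ℝ) ≤ a + b - 1) (by linarith : (0:ℝ) ≤ b + c - 2),
          sq_nonneg (a-b+1/2), sq_nonneg (b-c+1/2)]
      · -- case CC
        rw [integral_gmin a b c 0 (1/2) (1/2) (1/2) hab hbc (by norm_num) le_rfl le_rfl
              (Or.inl (by linarith)) (Or.inr rfl) (Or.inr rfl),
            integral_gmin a b c (1/2) 1 1 1 hab hbc (by norm_num) le_rfl le_rfl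
              (Or.inl hA2) (Or.inr rfl) (Or.inr rfl),
            integral_gmin a b c 1 (3/2) ((a+b)/2) ((b+c)/2) hab hbc hA2 hm12 hm2c
              (Or.inl le_rfl) (Or.inl ⟨le_rfl, le_rfl⟩) (Or.inl le_rfl)]
        unfold Gq
        nlinarith [sq_nonneg (a-1), sq_nonneg (b-c), sq_nonneg (a-b), sq_nonneg (a+b-2),
          sq_nonneg (c-3/2), mul_nonneg h0 h0]

lemma f2_nonneg (x : ℝ) : 0 ≤ f2 x := by
  unfold f2; split_ifs <;> norm_num

lemma measurable_f2 : Measurable f2 := by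
  unfold f2
  refine Measurable.ite (measurableSet_Icc.union measurableSet_Icc) measurable_const ?_
  exact Measurable.ite measurableSet_Ioo measurable_const measurable_const

lemma integral_P2 (g : ℝ → ℝ) (hg : Continuous g) :
    ∫ x, g x ∂P2 = (1 / 2) * (∫ x in (0:ℝ)..(1 / 2), g x)
      + (∫ x in (1 / 2:ℝ)..1, g x) + (1 / 2) * (∫ x in (1:ℝ)..(3 / 2), g x) := by
  have hmeas : Measurable fun x => (f2 x).toNNReal := measurable_f2.real_toNNReal
  have hP : P2 = volume.withDensity fun x => ((f2 x).toNNReal : ENNReal) := rfl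
  rw [hP, integral_withDensity_eq_integral_smul hmeas]
  have hsmul : ∀ x, (f2 x).toNNReal • g x = f2 x * g x := by
    intro x
    simp [NNReal.smul_def, Real.coe_toNNReal _ (f2_nonneg x)]
  simp_rw [hsmul]
  have hdec : ∀ x, f2 x * g x =
      (Icc (0:ℝ) (1 / 2)).indicator (fun y => (1 / 2) * g y) x
      + (Ioo (1 / 2:ℝ) 1).indicator g x
      + (Icc (1:ℝ) (3 / 2)).indicator (fun y => (1 / 2) * g y) x := by
    intro x
    by_cases hx1 : x ∈ Icc (0:ℝ) (1 / 2) <;>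
    by_cases hx2 : x ∈ Ioo (1 / 2:ℝ) 1 <;>
    by_cases hx3 : x ∈ Icc (1:ℝ) (3 / 2) <;>
    simp only [f2, Set.indicator_apply, if_pos, if_neg, hx1, hx2, hx3, Set.mem_union,
      if_true, if_false] <;>
    simp_all [Set.mem_Icc, Set.mem_Ioo] <;>
    (try ring) <;> exfalso <;>
    first
      | linarith [hx1.2, hx2.1]
      | linarith [hx2.2, hx3.1]
      | linarith [hx1.2, hx3.1]
  have i1 : Integrable ((Icc (0:ℝ) (1 / 2)).indicator (fun y => (1 / 2) * g y)) volume :=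
    (integrable_indicator_iff measurableSet_Icc).2 ((continuous_const.mul hg).integrableOn_Icc)
  have i2 : Integrable ((Ioo (1 / 2:ℝ) 1).indicator g) volume :=
    (integrable_indicator_iff measurableSet_Ioo).2 (hg.integrableOn_Icc.mono_set Ioo_subset_Icc_self)
  have i3 : Integrable ((Icc (1:ℝ) (3 / 2)).indicator (fun y => (1 / 2) * g y)) volume :=
    (integrable_indicator_iff measurableSet_Icc).2 ((continuous_const.mul hg).integrableOn_Icc)
  simp_rw [hdec]
  have key := integral_add (μ := volume) (i1.add i2) i3
  simp only [Pi.add_apply] at key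
  rw [key, integral_add i1 i2,
    integral_indicator measurableSet_Icc, integral_indicator measurableSet_Ioo,
    integral_indicator measurableSet_Icc,
    integral_Icc_eq_integral_Ioc, integral_Icc_eq_integral_Ioc, ← integral_Ioc_eq_integral_Ioo,
    ← intervalIntegral.integral_of_le (by norm_num : (0:ℝ) ≤ 1 / 2),
    ← intervalIntegral.integral_of_le (by norm_num : (1/2:ℝ) ≤ 1),
    ← intervalIntegral.integral_of_le (by norm_num : (1:ℝ) ≤ 3 / 2),
    intervalIntegral.integral_const_mul, intervalIntegral.integral_const_mul]

lemma gmin_swap12 (p q r : ℝ) : gmin q p r = gmin p q r := by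
  funext x; unfold gmin; rw [min_comm ((x - q) ^ 2) ((x - p) ^ 2)]

lemma gmin_swap23 (p q r : ℝ) : gmin p r q = gmin p q r := by
  funext x; unfold gmin; rw [min_right_comm]

lemma gmin_rot231 (p q r : ℝ) : gmin q r p = gmin p q r := by
  rw [gmin_swap23, gmin_swap12]

lemma gmin_rot312 (p q r : ℝ) : gmin r p q = gmin p q r := by
  rw [gmin_swap12, gmin_swap23]

lemma gmin_swap13 (p q r : ℝ) : gmin r q p = gmin p q r := by
  rw [gmin_swap12, gmin_rot231]

noncomputable def cl (t : ℝ) : ℝ := max 0 (min (3 / 2) t)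

lemma cl_nonneg (t : ℝ) : 0 ≤ cl t := le_max_left _ _

lemma cl_le (t : ℝ) : cl t ≤ 3 / 2 := max_le (by norm_num) (min_le_left _ _)

lemma sq_cl_le (t x : ℝ) (hx : x ∈ Icc (0:ℝ) (3 / 2)) : (x - cl t) ^ 2 ≤ (x - t) ^ 2 := by
  obtain ⟨hx0, hx1⟩ := hx
  unfold cl
  rcases le_total t 0 with ht | ht
  · rw [min_eq_right (by linarith), max_eq_left ht]
    nlinarith
  · rcases le_total t (3 / 2) with ht2 | ht2
    · rw [min_eq_right ht2, max_eq_right ht]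
    · rw [min_eq_left ht2, max_eq_right (by norm_num)]
      nlinarith

lemma gmin_cl_le (p q r x : ℝ) (hx : x ∈ Icc (0:ℝ) (3 / 2)) :
    gmin (cl p) (cl q) (cl r) x ≤ gmin p q r x := by
  unfold gmin
  exact min_le_min (min_le_min (sq_cl_le p x hx) (sq_cl_le q x hx)) (sq_cl_le r x hx)

lemma lower_via (p q r a b c : ℝ) (h0 : 0 ≤ a) (hab : a ≤ b) (hbc : b ≤ c) (hc : c ≤ 3 / 2)
    (hpt : ∀ x ∈ Icc (0:ℝ) (3 / 2), gmin a b c x ≤ gmin p q r x) :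
    1 / 48 ≤ (1 / 2) * (∫ x in (0:ℝ)..(1 / 2), gmin p q r x)
      + (∫ x in (1 / 2:ℝ)..1, gmin p q r x)
      + (1 / 2) * (∫ x in (1:ℝ)..(3 / 2), gmin p q r x) := by
  have hi : ∀ (a' b' c' : ℝ) (s t : ℝ), IntervalIntegrable (gmin a' b' c') volume s t :=
    fun a' b' c' s t => (gmin_continuous a' b' c').intervalIntegrable s t
  have m1 : (∫ x in (0:ℝ)..(1 / 2), gmin a b c x) ≤ ∫ x in (0:ℝ)..(1 / 2), gmin p q r x :=
    intervalIntegral.integral_mono_on (by norm_num) (hi a b c _ _) (hi p q r _ _)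
      (fun x hx => hpt x ⟨hx.1, by linarith [hx.2]⟩)
  have m2 : (∫ x in (1 / 2:ℝ)..1, gmin a b c x) ≤ ∫ x in (1 / 2:ℝ)..1, gmin p q r x :=
    intervalIntegral.integral_mono_on (by norm_num) (hi a b c _ _) (hi p q r _ _)
      (fun x hx => hpt x ⟨by linarith [hx.1], by linarith [hx.2]⟩)
  have m3 : (∫ x in (1:ℝ)..(3 / 2), gmin a b c x) ≤ ∫ x in (1:ℝ)..(3 / 2), gmin p q r x :=
    intervalIntegral.integral_mono_on (by norm_num) (hi a b c _ _) (hi p q r _ _)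
      (fun x hx => hpt x ⟨by linarith [hx.1], hx.2⟩)
  have := main_ineq a b c h0 hab hbc hc
  linarith

lemma lower_bound_triple (p q r : ℝ) :
    1 / 48 ≤ (1 / 2) * (∫ x in (0:ℝ)..(1 / 2), gmin p q r x)
      + (∫ x in (1 / 2:ℝ)..1, gmin p q r x)
      + (1 / 2) * (∫ x in (1:ℝ)..(3 / 2), gmin p q r x) := by
  have e : gmin (cl p) (cl q) (cl r) ≤ gmin p q r → True := fun _ => trivial
  rcases le_total (cl p) (cl q) with h1 | h1
  · rcases le_total (cl q) (cl r) with h2 | h2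
    · exact lower_via p q r (cl p) (cl q) (cl r) (cl_nonneg p) h1 h2 (cl_le r)
        (fun x hx => gmin_cl_le p q r x hx)
    · rcases le_total (cl p) (cl r) with h3 | h3
      · exact lower_via p q r (cl p) (cl r) (cl q) (cl_nonneg p) h3 h2 (cl_le q)
          (fun x hx => by rw [show gmin (cl p) (cl r) (cl q) x = gmin (cl p) (cl q) (cl r) x by
            rw [gmin_swap23]]; exact gmin_cl_le p q r x hx)
      · exact lower_via p q r (cl r) (cl p) (cl q) (cl_nonneg r) h3 h1 (cl_le q)
          (fun x hx => by rw [show gmin (cl r) (cl p) (cl q) x = gmin (cl p) (cl q) (cl r) x by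
            rw [gmin_rot312]]; exact gmin_cl_le p q r x hx)
  · rcases le_total (cl p) (cl r) with h2 | h2
    · exact lower_via p q r (cl q) (cl p) (cl r) (cl_nonneg q) h1 h2 (cl_le r)
        (fun x hx => by rw [show gmin (cl q) (cl p) (cl r) x = gmin (cl p) (cl q) (cl r) x by
          rw [gmin_swap12]]; exact gmin_cl_le p q r x hx)
    · rcases le_total (cl q) (cl r) with h3 | h3
      · exact lower_via p q r (cl q) (cl r) (cl p) (cl_nonneg q) h3 h2 (cl_le p)
          (fun x hx => by rw [show gmin (cl q) (cl r) (cl p) x = gmin (cl p) (cl q) (cl r) x by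
            rw [gmin_rot231]]; exact gmin_cl_le p q r x hx)
      · exact lower_via p q r (cl r) (cl q) (cl p) (cl_nonneg r) h3 h1 (cl_le p)
          (fun x hx => by rw [show gmin (cl r) (cl q) (cl p) x = gmin (cl p) (cl q) (cl r) x by
            rw [gmin_swap13]]; exact gmin_cl_le p q r x hx)

lemma dist_triple_eq (p q r : ℝ) :
    distortion P2 {p, q, r} = (1 / 2) * (∫ x in (0:ℝ)..(1 / 2), gmin p q r x)
      + (∫ x in (1 / 2:ℝ)..1, gmin p q r x)
      + (1 / 2) * (∫ x in (1:ℝ)..(3 / 2), gmin p q r x) := by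
  unfold distortion
  simp_rw [sInf_triple]
  exact integral_P2 (gmin p q r) (gmin_continuous p q r)

lemma dist_triple_ge (p q r : ℝ) : 1 / 48 ≤ distortion P2 {p, q, r} := by
  rw [dist_triple_eq]
  exact lower_bound_triple p q r

lemma dist_val : distortion P2 {1 / 4, 3 / 4, 5 / 4} = 1 / 48 := by
  rw [dist_triple_eq]
  rw [integral_gmin (1/4) (3/4) (5/4) 0 (1/2) (1/2) (1/2) (by norm_num) (by norm_num)
      (by norm_num) le_rfl (by norm_num) (Or.inl (by norm_num)) (Or.inr rfl) (Or.inr rfl),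
    integral_gmin (1/4) (3/4) (5/4) (1/2) 1 (1/2) 1 (by norm_num) (by norm_num)
      le_rfl (by norm_num) le_rfl (Or.inr rfl) (Or.inl ⟨by norm_num, by norm_num⟩) (Or.inr rfl),
    integral_gmin (1/4) (3/4) (5/4) 1 (3/2) 1 1 (by norm_num) (by norm_num)
      le_rfl le_rfl (by norm_num) (Or.inr rfl) (Or.inr rfl) (Or.inl (by norm_num))]
  unfold Gq
  norm_num

lemma card3 : ({1 / 4, 3 / 4, 5 / 4} : Set ℝ).ncard = 3 :=
  Set.ncard_eq_three.2 ⟨1 / 4, 3 / 4, 5 / 4, by norm_num, by norm_num, by norm_num, rfl⟩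

lemma memS : (1 / 48 : ℝ) ∈
    { v : ℝ | ∃ α : Set ℝ, α.Finite ∧ α.Nonempty ∧ α.ncard ≤ 3 ∧ v = distortion P2 α } :=
  ⟨{1 / 4, 3 / 4, 5 / 4}, Set.toFinite _, ⟨1 / 4, by simp⟩, by rw [card3], dist_val.symm⟩

lemma S_lb : ∀ v ∈ { v : ℝ | ∃ α : Set ℝ, α.Finite ∧ α.Nonempty ∧ α.ncard ≤ 3 ∧
    v = distortion P2 α }, 1 / 48 ≤ v := by
  rintro v ⟨α, hfin, hne, hcard, rfl⟩
  have hpos : 0 < α.ncard := (Set.ncard_pos hfin).2 hne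
  have h123 : α.ncard = 1 ∨ α.ncard = 2 ∨ α.ncard = 3 := by omega
  rcases h123 with h | h | h
  · obtain ⟨p, rfl⟩ := Set.ncard_eq_one.1 h
    have hset : ({p} : Set ℝ) = {p, p, p} := by simp
    rw [hset]
    exact dist_triple_ge p p p
  · obtain ⟨p, q, -, rfl⟩ := Set.ncard_eq_two.1 h
    have hset : ({p, q} : Set ℝ) = {p, q, q} := by simp
    rw [hset]
    exact dist_triple_ge p q q
  · obtain ⟨p, q, r, -, -, -, rfl⟩ := Set.ncard_eq_three.1 h
    exact dist_triple_ge p q r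

lemma quantErr_val : quantErr P2 3 = 1 / 48 := by
  unfold quantErr
  exact le_antisymm (csInf_le ⟨1 / 48, S_lb⟩ memS) (le_csInf ⟨1 / 48, memS⟩ S_lb)

theorem stmt_6 :
    IsOptimal P2 3 {1 / 4, 3 / 4, 5 / 4} ∧ quantErr P2 3 = 1 / 48 := by
  refine ⟨⟨Set.toFinite _, ?_, ?_, ?_⟩, quantErr_val⟩
  · rw [card3]; norm_num
  · rw [card3]
  · rw [dist_val, quantErr_val]
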